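/- Let θ₀ be the unique angle in (π/2, π) with cot θ₀ = −2/π, and let θ ∈ [π/2, θ₀]. For every τ > 0 and every z ∈ ℂ \ {0} with 0 ≤ arg z ≤ θ and 0 ≤ Im z ≤ π/τ, one has 1 − e^{−τz} ≠ 0 and 0 ≤ arg((1 − e^{−τz})/τ) ≤ arg z. Symmetrically, if −θ ≤ arg z ≤ 0 and −π/τ ≤ Im z ≤ 0, then arg z ≤ arg((1 − e^{−τz})/τ) ≤ 0. -/

import Mathlib

open Real

/-!
For `w = x + iy` with `0 < y ≤ π`, the function `g s = e^{-(x/y)s} (x sin s + y cos s)` has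
derivative `-e^{-(x/y)s} sin s (x² + y²) / y ≤ 0` on `[0, π]`, so `g y ≤ g 0 = y`. This says
`Im(1 - e^{-w}) Re w ≤ Re(1 - e^{-w}) Im w`: in the upper half-plane `1 - e^{-w}` lies clockwise
of `w`, so `arg (1 - e^{-w}) ≤ arg w`. The lower half-plane follows by complex conjugation, and
dividing by `τ > 0` does not change the argument.
-/

theorem Real.exp_neg_mul_add_mul_le {x y : ℝ} (hy : 0 < y) (hyπ : y ≤ π) :
    exp (-x) * (x * sin y + y * cos y) ≤ y := by
  set g : ℝ → ℝ := fun s => exp (-(x / y * s)) * (x * sin s + y * cos s)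
  have hg : ∀ s, HasDerivAt g (-(exp (-(x / y * s)) * sin s * (x ^ 2 + y ^ 2) / y)) s := by
    intro s
    refine ((((hasDerivAt_id s).const_mul (x / y)).neg.exp).mul
      (((hasDerivAt_sin s).const_mul x).add ((hasDerivAt_cos s).const_mul y))).congr_deriv ?_
    simp only [id, mul_one, Pi.neg_apply, Pi.add_apply]
    field_simp
    ring
  have hanti : AntitoneOn g (Set.Icc 0 π) := by
    refine antitoneOn_of_deriv_nonpos (convex_Icc 0 π) (by fun_prop)
      (fun s _ => (hg s).differentiableAt.differentiableWithinAt) fun s hs => ?_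
    rw [interior_Icc] at hs
    rw [(hg s).deriv, neg_nonpos]
    have := sin_nonneg_of_nonneg_of_le_pi hs.1.le hs.2.le
    positivity
  have := hanti ⟨le_rfl, pi_pos.le⟩ ⟨hy.le, hyπ⟩ hy.le
  simpa [g, div_mul_cancel₀ x hy.ne'] using this

namespace Complex

open ComplexConjugate

theorem re_one_sub_exp_neg (w : ℂ) :
    (1 - exp (-w)).re = 1 - Real.exp (-w.re) * Real.cos w.im := by
  simp [exp_re]

theorem im_one_sub_exp_neg (w : ℂ) :
    (1 - exp (-w)).im = Real.exp (-w.re) * Real.sin w.im := by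
  simp [exp_im]

theorem one_sub_exp_neg_ne_zero {w : ℂ} (hw : w ≠ 0) (him : |w.im| < 2 * π) :
    1 - exp (-w) ≠ 0 := by
  intro h
  obtain ⟨n, hn⟩ := exp_eq_one_iff.1 (sub_eq_zero.1 h).symm
  have hn_im : -w.im = n * (2 * π) := by simpa using congrArg im hn
  have hn0 : n = 0 := by
    rw [← abs_neg, hn_im, abs_mul, abs_of_pos two_pi_pos] at him
    have : |(n : ℝ)| < 1 := by nlinarith [two_pi_pos]
    exact Int.abs_lt_one_iff.1 (by exact_mod_cast this)
  exact hw (neg_eq_zero.1 (by simpa [hn0] using hn))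

theorem arg_le_arg_of_im_mul_re_le {u w : ℂ} (hu : 0 ≤ u.im) (hw : 0 < w.im)
    (h : u.im * w.re ≤ u.re * w.im) : u.arg ≤ w.arg := by
  have hw0 : w ≠ 0 := fun h => by simp [h] at hw
  rcases eq_or_ne u 0 with rfl | hu0
  · simpa using (arg_nonneg_iff.2 hw.le)
  have hw_arg : 0 < w.arg :=
    (arg_nonneg_iff.2 hw.le).lt_of_ne fun h => hw.ne' (arg_eq_zero_iff.1 h.symm).2
  by_contra! hlt
  have hsin : 0 < Real.sin (u.arg - w.arg) :=
    sin_pos_of_pos_of_lt_pi (by linarith) (by linarith [arg_le_pi u])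
  have : ‖u‖ * ‖w‖ * Real.sin (u.arg - w.arg) = u.im * w.re - u.re * w.im := by
    rw [Real.sin_sub, sin_arg, sin_arg, cos_arg hu0, cos_arg hw0]
    field_simp
  nlinarith [mul_pos (mul_pos (norm_pos_iff.2 hu0) (norm_pos_iff.2 hw0)) hsin]

theorem one_sub_exp_neg_conj (w : ℂ) : 1 - exp (-conj w) = conj (1 - exp (-w)) := by
  simp [← exp_conj]

theorem arg_one_sub_exp_neg_mem_Icc {w : ℂ} (h0 : 0 ≤ w.im) (hπ : w.im ≤ π) :
    (1 - exp (-w)).arg ∈ Set.Icc 0 w.arg := by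
  have him : 0 ≤ (1 - exp (-w)).im := by
    rw [im_one_sub_exp_neg]
    exact mul_nonneg (Real.exp_pos _).le (sin_nonneg_of_nonneg_of_le_pi h0 hπ)
  refine ⟨arg_nonneg_iff.2 him, ?_⟩
  rcases h0.eq_or_lt with h0 | h0
  · rcases le_or_gt 0 w.re with hre | hre
    · have hu : (1 - exp (-w)).arg = 0 := by
        refine arg_eq_zero_iff.2 ⟨?_, ?_⟩
        · rw [re_one_sub_exp_neg, ← h0, Real.cos_zero, mul_one, sub_nonneg]
          exact Real.exp_le_one_iff.2 (neg_nonpos.2 hre)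
        · rw [im_one_sub_exp_neg, ← h0, Real.sin_zero, mul_zero]
      rw [hu]
      exact arg_nonneg_iff.2 h0.le
    · rw [arg_eq_pi_iff.2 ⟨hre, h0.symm⟩]
      exact arg_le_pi _
  · refine arg_le_arg_of_im_mul_re_le him h0 ?_
    rw [re_one_sub_exp_neg, im_one_sub_exp_neg]
    linear_combination Real.exp_neg_mul_add_mul_le (x := w.re) h0 hπ

theorem arg_one_sub_exp_neg_mem_Icc_of_im_nonpos {w : ℂ} (h0 : -π ≤ w.im) (hπ : w.im ≤ 0)
    (hw : w.arg ≠ π) : (1 - exp (-w)).arg ∈ Set.Icc w.arg 0 := by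
  have hconj := arg_one_sub_exp_neg_mem_Icc (w := conj w) (by simpa using hπ)
    (by simpa using neg_le.1 h0)
  rw [one_sub_exp_neg_conj, arg_conj w, if_neg hw] at hconj
  have hu : (1 - exp (-w)).arg ≠ π := fun h => by
    rw [arg_conj, if_pos h] at hconj
    linarith [hconj.2, neg_pi_lt_arg w]
  rw [arg_conj, if_neg hu] at hconj
  exact ⟨by linarith [hconj.2], by linarith [hconj.1]⟩

end Complex

theorem stmt4_general (θ : ℝ) :
    ∀ τ : ℝ, 0 < τ → ∀ z : ℂ, z ≠ 0 →
      ((0 ≤ z.arg → z.arg ≤ θ → 0 ≤ z.im → z.im ≤ π / τ →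
        1 - Complex.exp (-((τ : ℂ) * z)) ≠ 0 ∧
        0 ≤ ((1 - Complex.exp (-((τ : ℂ) * z))) / (τ : ℂ)).arg ∧
        ((1 - Complex.exp (-((τ : ℂ) * z))) / (τ : ℂ)).arg ≤ z.arg) ∧
      (-θ ≤ z.arg → z.arg ≤ 0 → -(π / τ) ≤ z.im → z.im ≤ 0 →
        1 - Complex.exp (-((τ : ℂ) * z)) ≠ 0 ∧
        z.arg ≤ ((1 - Complex.exp (-((τ : ℂ) * z))) / (τ : ℂ)).arg ∧
        ((1 - Complex.exp (-((τ : ℂ) * z))) / (τ : ℂ)).arg ≤ 0)) := by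
  intro τ hτ z hz
  have harg : ((1 - Complex.exp (-(τ * z))) / τ).arg = (1 - Complex.exp (-(τ * z))).arg := by
    rw [div_eq_mul_inv, ← Complex.ofReal_inv, Complex.arg_mul_real (inv_pos.2 hτ)]
  have him : (τ * z).im = τ * z.im := Complex.im_ofReal_mul τ z
  have hne : |z.im| ≤ π / τ → 1 - Complex.exp (-(τ * z)) ≠ 0 := fun h =>
    Complex.one_sub_exp_neg_ne_zero (mul_ne_zero (Complex.ofReal_ne_zero.2 hτ.ne') hz) <| by
      rw [him, abs_mul, abs_of_pos hτ]
      linarith [(le_div_iff₀' hτ).1 h, pi_pos]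
  rw [harg, ← Complex.arg_real_mul z hτ]
  refine ⟨fun _ _ h0 hπ => ?_, fun _ hw hπ h0 => ?_⟩
  · have := Complex.arg_one_sub_exp_neg_mem_Icc (w := τ * z) (by rw [him]; positivity)
      (by rw [him]; exact (le_div_iff₀' hτ).1 hπ)
    exact ⟨hne (by rwa [abs_of_nonneg h0]), this⟩
  · have := Complex.arg_one_sub_exp_neg_mem_Icc_of_im_nonpos (w := τ * z) ?_ ?_ ?_
    · exact ⟨hne (by rw [abs_of_nonpos h0]; linarith), this⟩
    · rw [him]; linarith [(le_div_iff₀' hτ).1 (neg_le.1 hπ)]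
    · rw [him]; exact mul_nonpos_of_nonneg_of_nonpos hτ.le h0
    · exact (hw.trans_lt pi_pos).ne

/-- Let `θ₀` be the unique angle in `(π/2, π)` with `cot θ₀ = −2/π`,
and let `θ ∈ [π/2, θ₀]`. For every `τ > 0` and every nonzero `z : ℂ` with
`0 ≤ arg z ≤ θ` and `0 ≤ Im z ≤ π/τ`, one has `1 − e^{−τz} ≠ 0` and
`0 ≤ arg((1 − e^{−τz})/τ) ≤ arg z`; symmetrically for `−θ ≤ arg z ≤ 0` and
`−π/τ ≤ Im z ≤ 0`. -/
theorem stmt4 (θ₀ θ : ℝ) (hθ₀ : θ₀ ∈ Set.Ioo (π / 2) π)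
    (hcot : Real.cos θ₀ / Real.sin θ₀ = -2 / π)
    (hθ : θ ∈ Set.Icc (π / 2) θ₀) :
    ∀ τ : ℝ, 0 < τ → ∀ z : ℂ, z ≠ 0 →
      ((0 ≤ z.arg → z.arg ≤ θ → 0 ≤ z.im → z.im ≤ π / τ →
        1 - Complex.exp (-((τ : ℂ) * z)) ≠ 0 ∧
        0 ≤ ((1 - Complex.exp (-((τ : ℂ) * z))) / (τ : ℂ)).arg ∧
        ((1 - Complex.exp (-((τ : ℂ) * z))) / (τ : ℂ)).arg ≤ z.arg) ∧
      (-θ ≤ z.arg → z.arg ≤ 0 → -(π / τ) ≤ z.im → z.im ≤ 0 →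
        1 - Complex.exp (-((τ : ℂ) * z)) ≠ 0 ∧
        z.arg ≤ ((1 - Complex.exp (-((τ : ℂ) * z))) / (τ : ℂ)).arg ∧
        ((1 - Complex.exp (-((τ : ℂ) * z))) / (τ : ℂ)).arg ≤ 0)) :=
  stmt4_general θ
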